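/- Let k be a field and A a k-algebra. Let M be a nonzero A-module of finite length such that rad(M), the intersection of all maximal submodules of M, is a semisimple A-module and M/rad(M) is simple, isomorphic to a simple module τ. Assume that Ext¹_A(τ, τ) = 0 and that dim_k Ext¹_A(τ, σ) ≤ 1 for every simple A-module σ, where Ext¹_A is computed in the category of A-modules with its natural k-vector space structure. Then M is multiplicity free, i.e. the Jordan–Hölder factors of M are pairwise non-isomorphic. -/

import Mathlib

/-!
Since `rad M` is the unique maximal submodule of `M`, every map from `M` to a simple module `σ`
kills `rad M`, so the connecting map `Hom(rad M, σ) → Ext¹(τ, σ)` of the extension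
`0 → rad M → M → τ → 0` is injective and `k`-linear. In a composition series of `M` the top factor
is `τ`, and every other factor is a subquotient, hence a quotient, of the semisimple module
`rad M`. A factor `σ` occurring twice gives a surjection `rad M ↠ σ × σ`, hence
`dim_k Hom(rad M, σ) ≥ 2`; a factor `τ` below the top gives a nonzero map `rad M → τ`, although
`Ext¹(τ, τ) = 0`.
-/

open CategoryTheory Opposite

universe u v

/-- An isomorphism `X₂ / X₁ ∩ X₂ ≅ Y₂ / Y₁ ∩ Y₂` of modules for pairs `(X₁,X₂) (Y₁,Y₂) : Submodule R M`
(the definition removed from Mathlib, restored with its old meaning). -/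
def JordanHolderModule.Iso {R M : Type*} [Ring R] [AddCommGroup M] [Module R M]
    (X Y : Submodule R M × Submodule R M) : Prop :=
  Nonempty <| (X.2 ⧸ X.1.comap X.2.subtype) ≃ₗ[R] Y.2 ⧸ Y.1.comap Y.2.subtype

/-- An `A`-module `M` is *multiplicity free* if it admits a composition series (from `⊥` to `⊤`)
whose factors (its Jordan–Hölder factors) are pairwise non-isomorphic. -/
def MultiplicityFree (A M : Type*) [Ring A] [AddCommGroup M] [Module A M] : Prop :=
  ∃ s : CompositionSeries (Submodule A M), s.head = ⊥ ∧ s.last = ⊤ ∧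
    ∀ i j : Fin s.length, i ≠ j →
      ¬ JordanHolderModule.Iso (s i.castSucc, s i.succ) (s j.castSucc, s j.succ)

/-- The radical of a module: the intersection of all maximal submodules. -/
def moduleRadical (A M : Type*) [Ring A] [AddCommGroup M] [Module A M] : Submodule A M :=
  sInf {N : Submodule A M | IsCoatom N}

theorem LinearMap.exists_comp_eq_of_ker_le {R P M T : Type*} [Ring R] [AddCommGroup P]
    [Module R P] [AddCommGroup M] [Module R M] [AddCommGroup T] [Module R T] {φ : P →ₗ[R] M}
    (hφ : Function.Surjective φ) {ψ : P →ₗ[R] T} (h : LinearMap.ker φ ≤ LinearMap.ker ψ) :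
    ∃ g : M →ₗ[R] T, g ∘ₗ φ = ψ := by
  refine ⟨(LinearMap.ker φ).liftQ ψ h ∘ₗ (φ.quotKerEquivOfSurjective hφ).symm.toLinearMap, ?_⟩
  ext x
  have : (φ.quotKerEquivOfSurjective hφ).symm (φ x) = Submodule.Quotient.mk x :=
    (LinearEquiv.symm_apply_eq _).2 rfl
  simp [this]

theorem le_ker_of_forall_isCoatom_eq {R M σ : Type*} [Ring R] [AddCommGroup M] [Module R M]
    [AddCommGroup σ] [Module R σ] [IsSimpleModule R σ] {N : Submodule R M}
    (hN : ∀ W : Submodule R M, IsCoatom W → W = N) (g : M →ₗ[R] σ) : N ≤ LinearMap.ker g := by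
  rcases g.surjective_or_eq_zero with hg | rfl
  · exact (hN _ (LinearMap.isCoatom_ker_of_surjective hg)).ge
  · simp

section Semisimple

variable {R M : Type*} [Ring R] [AddCommGroup M] [Module R M] {N : Submodule R M}
  [IsSemisimpleModule R N]

theorem exists_surjective_subquotient (X : Submodule R M) {Y : Submodule R M} (hY : Y ≤ N) :
    ∃ g : N →ₗ[R] Y ⧸ X.comap Y.subtype, Function.Surjective g := by
  obtain ⟨g, hg⟩ := IsSemisimpleModule.extension_property _
    (Submodule.inclusion_injective hY) (X.comap Y.subtype).mkQ
  refine ⟨g, fun w => ?_⟩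
  obtain ⟨y, rfl⟩ := Submodule.mkQ_surjective _ w
  exact ⟨Submodule.inclusion hY y, LinearMap.congr_fun hg y⟩

theorem exists_surjective_prod_subquotient (X₁ : Submodule R M) {Y₁ X₂ Y₂ : Submodule R M}
    (h₁₂ : Y₁ ≤ X₂) (h₂ : X₂ ≤ Y₂) (hN : Y₂ ≤ N) :
    ∃ g : N →ₗ[R] (Y₁ ⧸ X₁.comap Y₁.subtype) × (Y₂ ⧸ X₂.comap Y₂.subtype),
      Function.Surjective g := by
  have hY₁ : Y₁ ≤ N := h₁₂.trans (h₂.trans hN)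
  obtain ⟨g₁, hg₁⟩ := IsSemisimpleModule.extension_property _
    (Submodule.inclusion_injective hY₁) (X₁.comap Y₁.subtype).mkQ
  obtain ⟨g₂, hg₂⟩ := IsSemisimpleModule.extension_property _
    (Submodule.inclusion_injective hN) (X₂.comap Y₂.subtype).mkQ
  refine ⟨g₁.prod g₂, fun ⟨a, b⟩ => ?_⟩
  obtain ⟨y₂, rfl⟩ := Submodule.mkQ_surjective _ b
  obtain ⟨y₁, hy₁⟩ := Submodule.mkQ_surjective _ (a - g₁ (Submodule.inclusion hN y₂))
  -- `Y₁ ≤ X₂` makes the correction term `y₁` invisible to `g₂`.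
  have hg₂y₁ : g₂ (Submodule.inclusion hY₁ y₁) = 0 := by
    have : g₂ (Submodule.inclusion hY₁ y₁) = Submodule.Quotient.mk (Submodule.inclusion _ y₁) :=
      LinearMap.congr_fun hg₂ (Submodule.inclusion (h₁₂.trans h₂) y₁)
    rw [this, Submodule.Quotient.mk_eq_zero]
    exact h₁₂ y₁.2
  refine ⟨Submodule.inclusion hN y₂ + Submodule.inclusion hY₁ y₁, ?_⟩
  have hg₁y₁ := LinearMap.congr_fun hg₁ y₁
  have hg₂y₂ := LinearMap.congr_fun hg₂ y₂
  simp only [LinearMap.comp_apply] at hg₁y₁ hg₂y₂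
  simp [hg₁y₁, hg₂y₂, hg₂y₁, hy₁]

end Semisimple

theorem CategoryTheory.ProjectiveResolution.exists_cocycleClass_ext_one {R : Type*} [Ring R]
    {C : Type*} [Category C] [Abelian C] [Linear R C] [EnoughProjectives C] {X : C}
    (P : ProjectiveResolution X) (Y : C) :
    ∃ cls : LinearMap.ker (Linear.leftComp R Y (P.complex.d 2 1)) →ₗ[R]
        ((Ext R C 1).obj (op X)).obj Y,
      ∀ φ, cls φ = 0 → ∃ y : P.complex.X 0 ⟶ Y, P.complex.d 1 0 ≫ y = φ := by
  let S := (P.complex.linearYonedaObj R Y).sc' 0 1 2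
  let e := P.isoExt 1 Y ≪≫
    (P.complex.linearYonedaObj R Y).homologyIsoSc' 0 1 2 (by simp) (by simp) ≪≫
    S.moduleCatHomologyIso
  refine ⟨e.toLinearEquiv.symm.toLinearMap ∘ₗ S.moduleCatToCycles.range.mkQ, fun φ hφ => ?_⟩
  obtain ⟨y, hy⟩ := (Submodule.Quotient.mk_eq_zero _).1 (e.toLinearEquiv.symm.map_eq_zero_iff.1 hφ)
  exact ⟨y, congrArg Subtype.val hy⟩

section ExtOne

variable {k : Type v} [Field k] {A : Type u} [Ring A] [Algebra k A]
  {M τ : Type u} [AddCommGroup M] [Module A M] [AddCommGroup τ] [Module A τ]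

/-- `δ` is the connecting map of the extension `0 → N → M → τ → 0`. -/
theorem exists_ext_one_connecting (N : Submodule A M) (e : (M ⧸ N) ≃ₗ[A] τ)
    (σ : Type u) [AddCommGroup σ] [Module A σ] :
    ∃ δ : (ModuleCat.of A N ⟶ ModuleCat.of A σ) →ₗ[k]
        ((Ext k (ModuleCat.{u} A) 1).obj (op (ModuleCat.of A τ))).obj (ModuleCat.of A σ),
      ∀ f, δ f = 0 → ∃ g : M →ₗ[A] σ, g ∘ₗ N.subtype = f.hom := by
  let P := projectiveResolution (ModuleCat.of A τ)
  obtain ⟨cls, hcls⟩ := P.exists_cocycleClass_ext_one (R := k) (ModuleCat.of A σ)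
  let q : ModuleCat.of A M ⟶ ((ChainComplex.single₀ _).obj (ModuleCat.of A τ)).X 0 :=
    ModuleCat.ofHom (e.toLinearMap ∘ₗ N.mkQ)
  have hq : ∀ m, q m = 0 ↔ m ∈ N := fun m => by
    change e (N.mkQ m) = 0 ↔ _
    rw [LinearEquiv.map_eq_zero_iff, Submodule.mkQ_apply, Submodule.Quotient.mk_eq_zero]
  have : Epi q := (ModuleCat.epi_iff_surjective q).2 (e.surjective.comp N.mkQ_surjective)
  let α₀ : P.complex.X 0 ⟶ ModuleCat.of A M := Projective.factorThru (P.π.f 0) q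
  have hα₀ : ∀ p, q (α₀ p) = P.π.f 0 p := fun p =>
    ConcreteCategory.congr_hom (Projective.factorThru_comp (P.π.f 0) q) p
  have hmem : ∀ z, α₀ (P.complex.d 1 0 z) ∈ N := fun z => by
    rw [← hq, hα₀]
    exact ConcreteCategory.congr_hom P.complex_d_comp_π_f_zero z
  let α₁ : P.complex.X 1 ⟶ ModuleCat.of A N :=
    ModuleCat.ofHom ((P.complex.d 1 0 ≫ α₀).hom.codRestrict N hmem)
  have hα₁ : ∀ z, (α₁ z : M) = α₀ (P.complex.d 1 0 z) := fun _ => rfl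
  have hcocycle : P.complex.d 2 1 ≫ α₁ = 0 := by
    ext z
    have hdd := ConcreteCategory.congr_hom (P.complex.d_comp_d 2 1 0) z
    simp only [ConcreteCategory.comp_apply] at hdd
    simp [hα₁, hdd]
  refine ⟨cls ∘ₗ (Linear.leftComp k _ α₁).codRestrict _ (fun f => by
    simp [← Category.assoc, hcocycle]), fun f hf => ?_⟩
  obtain ⟨y, hy⟩ := hcls _ hf
  replace hy : ∀ z, y (P.complex.d 1 0 z) = f (α₁ z) := fun z => ConcreteCategory.congr_hom hy z
  have hexact : ∀ p, P.π.f 0 p = 0 → ∃ z, P.complex.d 1 0 z = p :=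
    (ShortComplex.moduleCat_exact_iff _).1 P.exact₀
  -- `g` is defined on `M` as `α₀ p + n ↦ y p + f n`.
  have hsurj : Function.Surjective (α₀.hom.coprod N.subtype) := by
    intro m
    obtain ⟨p, hp⟩ := (ModuleCat.epi_iff_surjective (P.π.f 0)).1 inferInstance (q m)
    have hmp : m - α₀ p ∈ N := by rw [← hq, map_sub, hα₀, hp, sub_self]
    exact ⟨(p, ⟨_, hmp⟩), by simp⟩
  have hker : LinearMap.ker (α₀.hom.coprod N.subtype) ≤ LinearMap.ker (y.hom.coprod f.hom) := by
    rintro ⟨p, n⟩ hpn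
    replace hpn : α₀ p = -n := eq_neg_of_add_eq_zero_left hpn
    obtain ⟨z, rfl⟩ := hexact p (by rw [← hα₀, (hq _).2 (by rw [hpn]; exact neg_mem n.2)])
    have hn : n = -α₁ z := Subtype.ext (by simp [hα₁, hpn])
    simp [hy, hn]
  obtain ⟨g, hg⟩ := LinearMap.exists_comp_eq_of_ker_le hsurj hker
  refine ⟨g, ?_⟩
  ext n
  simpa using LinearMap.congr_fun hg (0, n)

theorem exists_injective_ext_one {N : Submodule A M}
    (hN : ∀ W : Submodule A M, IsCoatom W → W = N)
    (e : (M ⧸ N) ≃ₗ[A] τ) (σ : Type u) [AddCommGroup σ] [Module A σ] [IsSimpleModule A σ] :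
    ∃ δ : (ModuleCat.of A N ⟶ ModuleCat.of A σ) →ₗ[k]
        ((Ext k (ModuleCat.{u} A) 1).obj (op (ModuleCat.of A τ))).obj (ModuleCat.of A σ),
      Function.Injective δ := by
  obtain ⟨δ, hδ⟩ := exists_ext_one_connecting (k := k) N e σ
  refine ⟨δ, (injective_iff_map_eq_zero δ).2 fun f hf => ?_⟩
  obtain ⟨g, hg⟩ := hδ f hf
  ext n
  simpa [← hg] using le_ker_of_forall_isCoatom_eq hN g n.2

theorem two_le_rank_hom_of_surjective_prod {P σ : Type u} [AddCommGroup P] [Module A P]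
    [AddCommGroup σ] [Module A σ] [Nontrivial σ] {p : P →ₗ[A] σ × σ}
    (hp : Function.Surjective p) :
    2 ≤ Module.rank k (ModuleCat.of A P ⟶ ModuleCat.of A σ) := by
  obtain ⟨x, hx⟩ := exists_ne (0 : σ)
  have hli : LinearIndependent k ![ModuleCat.ofHom (LinearMap.fst A σ σ ∘ₗ p),
      ModuleCat.ofHom (LinearMap.snd A σ σ ∘ₗ p)] := by
    rw [LinearIndependent.pair_iff]
    intro s t hst
    obtain ⟨a, ha⟩ := hp (x, 0)
    obtain ⟨b, hb⟩ := hp (0, x)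
    constructor
    · simpa [ha, hx] using ConcreteCategory.congr_hom hst a
    · simpa [hb, hx] using ConcreteCategory.congr_hom hst b
  simpa using hli.cardinal_lift_le_rank

theorem not_iso_top_of_le [IsSimpleModule A τ] {N : Submodule A M} [IsSemisimpleModule A N]
    (hN : ∀ W : Submodule A M, IsCoatom W → W = N) (e : (M ⧸ N) ≃ₗ[A] τ)
    (hself : Subsingleton
      ((((Ext k (ModuleCat.{u} A) 1).obj (op (ModuleCat.of A τ))).obj
        (ModuleCat.of A τ)).carrier))
    {X Y : Submodule A M} (hY : Y ≤ N) :
    ¬ JordanHolderModule.Iso (X, Y) (N, ⊤) := by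
  rintro ⟨φ : (Y ⧸ X.comap Y.subtype) ≃ₗ[A]
    (⊤ : Submodule A M) ⧸ N.comap (⊤ : Submodule A M).subtype⟩
  obtain ⟨p, hp⟩ := exists_surjective_subquotient X hY
  obtain ⟨δ, hδ⟩ := exists_injective_ext_one (k := k) hN e τ
  let top : ((⊤ : Submodule A M) ⧸ N.comap (⊤ : Submodule A M).subtype) ≃ₗ[A] M ⧸ N :=
    Submodule.Quotient.equiv _ N Submodule.topEquiv (by ext; simp)
  let ψ := (φ ≪≫ₗ top ≪≫ₗ e).toLinearMap ∘ₗ p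
  have hψ : ModuleCat.ofHom ψ = 0 := hδ (Subsingleton.elim _ _)
  have := IsSimpleModule.nontrivial A τ
  obtain ⟨x, hx⟩ := exists_ne (0 : τ)
  obtain ⟨n, hn⟩ := ((φ ≪≫ₗ top ≪≫ₗ e).surjective.comp hp) x
  exact hx (hn ▸ ConcreteCategory.congr_hom hψ n)

theorem not_iso_of_le_of_covBy {N : Submodule A M} [IsSemisimpleModule A N]
    (hN : ∀ W : Submodule A M, IsCoatom W → W = N) (e : (M ⧸ N) ≃ₗ[A] τ)
    (hext : ∀ (σ : Type u) [AddCommGroup σ] [Module A σ], IsSimpleModule A σ →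
      Module.rank k
        ((((Ext k (ModuleCat.{u} A) 1).obj (op (ModuleCat.of A τ))).obj
          (ModuleCat.of A σ)).carrier) ≤ 1)
    {X₁ Y₁ X₂ Y₂ : Submodule A M} (h₁₂ : Y₁ ≤ X₂) (h₂ : X₂ ⋖ Y₂) (hY₂ : Y₂ ≤ N) :
    ¬ JordanHolderModule.Iso (X₁, Y₁) (X₂, Y₂) := by
  rintro ⟨φ : (Y₁ ⧸ X₁.comap Y₁.subtype) ≃ₗ[A] Y₂ ⧸ X₂.comap Y₂.subtype⟩
  have hσ := (covBy_iff_quot_is_simple h₂.le).1 h₂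
  have := IsSimpleModule.nontrivial A (Y₂ ⧸ X₂.comap Y₂.subtype)
  obtain ⟨p, hp⟩ := exists_surjective_prod_subquotient X₁ h₁₂ h₂.le hY₂
  obtain ⟨δ, hδ⟩ := exists_injective_ext_one (k := k) hN e (Y₂ ⧸ X₂.comap Y₂.subtype)
  have h2 := two_le_rank_hom_of_surjective_prod (k := k)
    (p := (φ.prodCongr (LinearEquiv.refl A _)).toLinearMap ∘ₗ p)
    ((φ.prodCongr (LinearEquiv.refl A _)).surjective.comp hp)
  have := (h2.trans (LinearMap.rank_le_of_injective δ hδ)).trans (hext _ hσ)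
  norm_num at this

end ExtOne

theorem statement9_general {k : Type v} [Field k] {A : Type u} [Ring A] [Algebra k A]
    (M : Type u) [AddCommGroup M] [Module A M]
    (hfl : IsFiniteLength A M)
    (τ : Type u) [AddCommGroup τ] [Module A τ] [IsSimpleModule A τ]
    (hrad : IsSemisimpleModule A (moduleRadical A M))
    (hcosoc : Nonempty ((M ⧸ moduleRadical A M) ≃ₗ[A] τ))
    (hself : Subsingleton
      ((((Ext k (ModuleCat.{u} A) 1).obj (op (ModuleCat.of A τ))).obj
        (ModuleCat.of A τ)).carrier))
    (hext : ∀ (σ : Type u) [AddCommGroup σ] [Module A σ], IsSimpleModule A σ →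
      Module.rank k
        ((((Ext k (ModuleCat.{u} A) 1).obj (op (ModuleCat.of A τ))).obj
          (ModuleCat.of A σ)).carrier) ≤ 1) :
    MultiplicityFree A M := by
  obtain ⟨e⟩ := hcosoc
  set N := moduleRadical A M
  have hNcoatom : IsCoatom N := isSimpleModule_iff_isCoatom.1 (IsSimpleModule.congr e)
  have huniq : ∀ W : Submodule A M, IsCoatom W → W = N := fun W hW =>
    (hNcoatom.le_iff.1 (sInf_le hW)).resolve_left hW.1
  have : IsNoetherian A M := (isFiniteLength_iff_isNoetherian_isArtinian.1 hfl).1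
  have hmax : ∀ W : Submodule A M, W ≠ ⊤ → W ≤ N := fun W hW => by
    obtain ⟨W', hW', hle⟩ := (eq_top_or_exists_le_coatom W).resolve_left hW
    exact hle.trans (huniq W' hW').le
  obtain ⟨t, ht₀, ht⟩ := isFiniteLength_iff_exists_compositionSeries.1 hfl
  have htop : t (Fin.last _) = ⊤ := ht
  refine ⟨t, ht₀, ht, fun i j hij hiso => ?_⟩
  wlog hlt : i < j generalizing i j
  · exact this j i hij.symm (hiso.elim fun φ => ⟨φ.symm⟩) (hij.lt_or_gt.resolve_left hlt)
  have hij' : t i.succ ≤ t j.castSucc := t.strictMono.monotone (Fin.succ_le_castSucc_iff.2 hlt)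
  have hjN : t j.castSucc ≤ N := hmax _ (htop ▸ t.strictMono (Fin.castSucc_lt_last j)).ne
  by_cases hj : j.succ = Fin.last t.length
  · rw [← hj] at htop
    have hcov : t j.castSucc ⋖ ⊤ := htop ▸ t.step j
    rw [htop, huniq _ (covBy_top_iff.1 hcov)] at hiso
    exact not_iso_top_of_le huniq e hself (hij'.trans hjN) hiso
  · exact not_iso_of_le_of_covBy huniq e hext hij' (t.step j)
      (hmax _ (htop ▸ t.strictMono (Fin.lt_last_iff_ne_last.2 hj)).ne) hiso

/-- **Claim inside the proof of Lemma 4.3.5**: let `A` be an algebra over a field `k`, and `M` a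
nonzero `A`-module of finite length whose radical `rad M` (the intersection of all maximal
submodules) is semisimple, with `M/rad M` simple and isomorphic to a simple module `τ`.  If
`Ext¹_A(τ, τ) = 0` and `dim_k Ext¹_A(τ, σ) ≤ 1` for every simple `A`-module `σ`, then `M` is
multiplicity free. -/
theorem statement9 {k : Type v} [Field k] {A : Type u} [Ring A] [Algebra k A]
    (M : Type u) [AddCommGroup M] [Module A M] [Nontrivial M]
    (hfl : IsFiniteLength A M)
    (τ : Type u) [AddCommGroup τ] [Module A τ] [IsSimpleModule A τ]
    (hrad : IsSemisimpleModule A (moduleRadical A M))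
    (hcosoc : Nonempty ((M ⧸ moduleRadical A M) ≃ₗ[A] τ))
    (hself : Subsingleton
      ((((Ext k (ModuleCat.{u} A) 1).obj (op (ModuleCat.of A τ))).obj
        (ModuleCat.of A τ)).carrier))
    (hext : ∀ (σ : Type u) [AddCommGroup σ] [Module A σ], IsSimpleModule A σ →
      Module.rank k
        ((((Ext k (ModuleCat.{u} A) 1).obj (op (ModuleCat.of A τ))).obj
          (ModuleCat.of A σ)).carrier) ≤ 1) :
    MultiplicityFree A M :=
  statement9_general M hfl τ hrad hcosoc hself hext
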